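/- Define Fibonacci numbers by F₀ = 0, F₁ = 1, F_{n+2} = F_{n+1} + F_n. Define rational sequences (x_n), (y_n) by x₀ = 2, y₀ = 6, x₁ = 5, y₁ = 16, and for n ≥ 1: x_{n+1} = (1 + x_n²)/x_{n−1} and y_{n+1} = (−x_{n+1}·y_{n−1} + 2 + 2·x_n·y_n)/x_{n−1}. Then for all n, x_n = F_{2n+3} and y_n = 2·F_{2n+4}; that is, along the Fibonacci branch of the Markoff tree, the shadows arising from the initial shadow triple (0, 2, 1) are twice the even-indexed Fibonacci numbers. -/

import Mathlib

/-- The Fibonacci numbers: `F₀ = 0`, `F₁ = 1`, `F_{n+2} = F_{n+1} + F_n`. -/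
def fib : ℕ → ℚ
  | 0 => 0
  | 1 => 1
  | n + 2 => fib (n + 1) + fib n

/-
The recurrences are the real and shadow parts of the dual-number mutation `B' = (A² + C²)/B`,
which determines each term from the two before it; so it suffices to check that `F_{2n+3}` and
`2 F_{2n+4}` satisfy them. In terms of `a = F_m`, `b = F_{m+1}` both checks reduce to Cassini's
identity `a² + ab - b² = (-1)^(m+1)`, with `m = 2n+3` odd.
-/

lemma fib_add_two (n : ℕ) : fib (n + 2) = fib (n + 1) + fib n := by
  rw [fib]

lemma fib_eq_natFib (n : ℕ) : fib n = Nat.fib n := by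
  induction n using Nat.twoStepInduction with
  | zero => simp [fib]
  | one => simp [fib]
  | more n ih ih1 => rw [fib_add_two, ih, ih1, Nat.fib_add_two]; push_cast; ring

lemma fib_ne_zero {n : ℕ} (hn : n ≠ 0) : fib n ≠ 0 := by
  rw [fib_eq_natFib]
  exact_mod_cast Nat.fib_eq_zero.not.mpr hn

lemma fib_mul_fib_add_two_sub_sq (m : ℕ) :
    fib m * fib (m + 2) - fib (m + 1) ^ 2 = (-1) ^ (m + 1) := by
  induction m with
  | zero => norm_num [fib]
  | succ m ih =>
    rw [fib_add_two (m + 1), fib_add_two m] at *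
    linear_combination -ih

lemma fib_mul_fib_add_four (m : ℕ) :
    fib m * fib (m + 4) = fib (m + 2) ^ 2 - (-1) ^ m := by
  have h := fib_mul_fib_add_two_sub_sq m
  simp only [fib_add_two] at *
  linear_combination h

lemma fib_mul_fib_add_five_add_fib_mul_fib_add_four (m : ℕ) :
    fib m * fib (m + 5) + fib (m + 1) * fib (m + 4) =
      2 * fib (m + 2) * fib (m + 3) - (-1) ^ m := by
  have h := fib_mul_fib_add_two_sub_sq m
  simp only [fib_add_two] at *
  linear_combination h

lemma real_mutation_fib (n : ℕ) :
    (1 + fib (2 * (n + 1) + 3) ^ 2) / fib (2 * n + 3) = fib (2 * (n + 2) + 3) := by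
  have h := fib_mul_fib_add_four (2 * n + 3)
  rw [Odd.neg_one_pow ⟨n + 1, by ring⟩] at h
  rw [div_eq_iff (fib_ne_zero (by omega)), show 2 * (n + 1) + 3 = 2 * n + 3 + 2 by ring,
    show 2 * (n + 2) + 3 = 2 * n + 3 + 4 by ring]
  linear_combination -h

lemma shadow_mutation_fib (n : ℕ) :
    (-fib (2 * (n + 2) + 3) * (2 * fib (2 * n + 4)) + 2 +
        2 * fib (2 * (n + 1) + 3) * (2 * fib (2 * (n + 1) + 4))) / fib (2 * n + 3) =
      2 * fib (2 * (n + 2) + 4) := by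
  have h := fib_mul_fib_add_five_add_fib_mul_fib_add_four (2 * n + 3)
  rw [Odd.neg_one_pow ⟨n + 1, by ring⟩] at h
  rw [div_eq_iff (fib_ne_zero (by omega)), show 2 * n + 4 = 2 * n + 3 + 1 by ring,
    show 2 * (n + 1) + 3 = 2 * n + 3 + 2 by ring, show 2 * (n + 1) + 4 = 2 * n + 3 + 3 by ring,
    show 2 * (n + 2) + 3 = 2 * n + 3 + 4 by ring, show 2 * (n + 2) + 4 = 2 * n + 3 + 5 by ring]
  linear_combination -2 * h

/-- Along the Fibonacci branch of the shadow Markoff tree with initial shadow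
triple `(0, 2, 1)`, the real parts are the odd-indexed Fibonacci numbers and
the shadows are twice the even-indexed Fibonacci numbers. -/
theorem fibonacci_branch_shadow (x y : ℕ → ℚ)
    (hx0 : x 0 = 2) (hy0 : y 0 = 6) (hx1 : x 1 = 5) (hy1 : y 1 = 16)
    (hx : ∀ n, x (n + 2) = (1 + x (n + 1) ^ 2) / x n)
    (hy : ∀ n, y (n + 2) =
      (-(x (n + 2)) * y n + 2 + 2 * x (n + 1) * y (n + 1)) / x n) :
    ∀ n, x n = fib (2 * n + 3) ∧ y n = 2 * fib (2 * n + 4) := by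
  intro n
  induction n using Nat.twoStepInduction with
  | zero => norm_num [hx0, hy0, fib]
  | one => norm_num [hx1, hy1, fib]
  | more n ih ih1 =>
    obtain ⟨hxn, hyn⟩ := ih
    obtain ⟨hxn1, hyn1⟩ := ih1
    have hxn2 : x (n + 2) = fib (2 * (n + 2) + 3) := by
      rw [hx, hxn, hxn1, real_mutation_fib]
    exact ⟨hxn2, by rw [hy, hxn2, hxn, hyn, hxn1, hyn1, shadow_mutation_fib]⟩
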